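/- arXiv:1911.10408 — 4 statements merged into one kernel-verified Lean document; each statement's English description precedes it below -/
import Mathlib

section
/- Let β > 0, γ > 0, k ∈ ℝ, and let s > 0 be a real number with s^β > |k|. Then ∫₀^∞ e^{-st} t^{γ-1} E_{β,γ}(k t^β) dt = s^{β-γ} / (s^β - k). -/
/-!
Expand `E_{β,γ}(k t^β)` into its power series and integrate term by term: by the Gamma integral,
`∫₀^∞ e^{-st} t^{βr+γ-1} dt = Γ(βr+γ) / s^{βr+γ}`, so the `r`-th term contributes
`(k / s^β)^r / s^γ`. The same computation with `|k|` in place of `k` shows that the integrals of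
the absolute values form a convergent geometric series (as `|k| < s^β`), which justifies the
interchange; summing the geometric series gives `s^{-γ} / (1 - k / s^β) = s^{β-γ} / (s^β - k)`.
-/

open MeasureTheory

/-- The two-parameter Mittag-Leffler function `E_{β,γ}(z) = Σ_{r=0}^∞ z^r / Γ(βr + γ)`. -/
noncomputable def mittagLeffler (β γ z : ℝ) : ℝ :=
  ∑' r : ℕ, z ^ r / Real.Gamma (β * r + γ)

open Set Real

noncomputable def mittagLefflerLaplaceTerm (β γ k s : ℝ) (r : ℕ) (t : ℝ) : ℝ :=
  exp (-s * t) * t ^ (γ - 1) * ((k * t ^ β) ^ r / Gamma (β * r + γ))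

lemma integrableOn_rpow_mul_exp_neg_mul {a s : ℝ} (ha : 0 < a) (hs : 0 < s) :
    IntegrableOn (fun t : ℝ => t ^ (a - 1) * exp (-(s * t))) (Ioi 0) := by
  simpa using integrableOn_rpow_mul_exp_neg_mul_rpow (p := 1) (by linarith : -1 < a - 1) one_pos hs

namespace mittagLefflerLaplaceTerm

variable {β γ s : ℝ}

lemma tsum_eq (β γ k s t : ℝ) :
    ∑' r, mittagLefflerLaplaceTerm β γ k s r t
      = exp (-s * t) * t ^ (γ - 1) * mittagLeffler β γ (k * t ^ β) :=
  tsum_mul_left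

lemma eq_mul_rpow_mul_exp (k : ℝ) (r : ℕ) {t : ℝ} (ht : 0 < t) :
    mittagLefflerLaplaceTerm β γ k s r t
      = k ^ r / Gamma (β * r + γ) * (t ^ (β * r + γ - 1) * exp (-(s * t))) := by
  rw [mittagLefflerLaplaceTerm, mul_pow, ← rpow_natCast (t ^ β), ← rpow_mul ht.le,
    show β * r + γ - 1 = β * r + (γ - 1) by ring, rpow_add ht, neg_mul]
  ring

lemma integrableOn (hβ : 0 ≤ β) (hγ : 0 < γ) (hs : 0 < s) (k : ℝ) (r : ℕ) :
    IntegrableOn (mittagLefflerLaplaceTerm β γ k s r) (Ioi 0) :=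
  IntegrableOn.congr_fun
    ((integrableOn_rpow_mul_exp_neg_mul (a := β * r + γ) (by positivity) hs).const_mul _)
    (fun _ ht => (eq_mul_rpow_mul_exp k r ht).symm) measurableSet_Ioi

lemma norm_eq (hβ : 0 ≤ β) (hγ : 0 < γ) (k : ℝ) (r : ℕ) {t : ℝ} (ht : 0 < t) :
    ‖mittagLefflerLaplaceTerm β γ k s r t‖ = mittagLefflerLaplaceTerm β γ |k| s r t := by
  have hΓ : 0 < Gamma (β * r + γ) := Gamma_pos_of_pos (by positivity)
  rw [eq_mul_rpow_mul_exp k r ht, eq_mul_rpow_mul_exp |k| r ht, norm_mul, norm_div, norm_pow,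
    Real.norm_eq_abs, Real.norm_of_nonneg hΓ.le, Real.norm_of_nonneg (by positivity)]

lemma integral_eq (hβ : 0 ≤ β) (hγ : 0 < γ) (hs : 0 < s) (k : ℝ) (r : ℕ) :
    ∫ t in Ioi 0, mittagLefflerLaplaceTerm β γ k s r t = (k / s ^ β) ^ r / s ^ γ := by
  have hΓ : 0 < Gamma (β * r + γ) := Gamma_pos_of_pos (by positivity)
  rw [setIntegral_congr_fun measurableSet_Ioi (fun _ ht => eq_mul_rpow_mul_exp k r ht),
    integral_const_mul, integral_rpow_mul_exp_neg_mul_Ioi (by positivity) hs, one_div,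
    inv_rpow hs.le, rpow_add hs, rpow_mul hs.le, rpow_natCast, div_pow]
  field_simp

lemma summable_integral_norm (hβ : 0 ≤ β) (hγ : 0 < γ) (hs : 0 < s) {k : ℝ} (hks : |k| < s ^ β) :
    Summable fun r : ℕ => ∫ t in Ioi 0, ‖mittagLefflerLaplaceTerm β γ k s r t‖ := by
  have hsβ : 0 < s ^ β := rpow_pos_of_pos hs β
  have hnorm (r : ℕ) : ∫ t in Ioi 0, ‖mittagLefflerLaplaceTerm β γ k s r t‖
      = (|k| / s ^ β) ^ r / s ^ γ := by
    rw [setIntegral_congr_fun measurableSet_Ioi (fun _ ht => norm_eq hβ hγ k r ht),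
      integral_eq hβ hγ hs]
  simp_rw [hnorm]
  refine (summable_geometric_of_abs_lt_one ?_).div_const _
  rwa [abs_div, abs_abs, abs_of_pos hsβ, div_lt_one hsβ]

end mittagLefflerLaplaceTerm

open mittagLefflerLaplaceTerm in
/-- **Laplace transform of `t^(γ-1) E_{β,γ}(k t^β)`.**
For `β, γ > 0`, `k ∈ ℝ` and real `s > 0` with `s^β > |k|`,
`∫₀^∞ e^(-st) t^(γ-1) E_{β,γ}(k t^β) dt = s^(β-γ) / (s^β - k)`. -/
theorem laplace_mittagLeffler (β γ k s : ℝ) (hβ : 0 < β) (hγ : 0 < γ)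
    (hs : 0 < s) (hks : |k| < s ^ β) :
    ∫ t in Set.Ioi (0:ℝ),
        Real.exp (-s * t) * t ^ (γ - 1) * mittagLeffler β γ (k * t ^ β)
      = s ^ (β - γ) / (s ^ β - k) := by
  have hsβ : 0 < s ^ β := rpow_pos_of_pos hs β
  have hratio : |k / s ^ β| < 1 := by rwa [abs_div, abs_of_pos hsβ, div_lt_one hsβ]
  calc ∫ t in Ioi 0, exp (-s * t) * t ^ (γ - 1) * mittagLeffler β γ (k * t ^ β)
      = ∑' r, ∫ t in Ioi 0, mittagLefflerLaplaceTerm β γ k s r t := by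
        simp_rw [← tsum_eq]
        exact (integral_tsum_of_summable_integral_norm (integrableOn hβ.le hγ hs k)
          (summable_integral_norm hβ.le hγ hs hks)).symm
    _ = (1 - k / s ^ β)⁻¹ / s ^ γ := by
        simp_rw [integral_eq hβ.le hγ hs, tsum_div_const, tsum_geometric_of_abs_lt_one hratio]
    _ = s ^ (β - γ) / (s ^ β - k) := by
        have hsβk : s ^ β - k ≠ 0 := by linarith [(abs_lt.mp hks).2]
        rw [rpow_sub hs]
        field_simp
end

section
/- (Invariant subspace theorem for scalar time-fractional PDEs.) Let α ∈ (0,1), m ∈ ℕ, λ₀,…,λ_m ∈ ℝ, and n ≥ 1. Let φ₁,…,φₙ : ℝ → ℝ, let Ĝ be a map from real-valued functions on ℝ to real-valued functions on ℝ, and let Φ₁,…,Φₙ : ℝⁿ → ℝ be such that Ĝ[Σ_{j=1}^n a_j φ_j] = Σ_{j=1}^n Φ_j(a₁,…,aₙ) φ_j for every (a₁,…,aₙ) ∈ ℝⁿ (i.e. the linear span of φ₁,…,φₙ is invariant under Ĝ). Let A₁,…,Aₙ : [0,∞) → ℝ be (m+1)-times continuously differentiable functions satisfying the system of fractional ODEs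 Σ_{i=0}^m λ_i (1/Γ(1-α)) ∫₀ᵗ A_j^{(i+1)}(s) (t-s)^{-α} ds = Φ_j(A₁(t),…,Aₙ(t)) for all t > 0 and j = 1,…,n. Then u(x,t) := Σ_{j=1}^n A_j(t) φ_j(x) satisfies Σ_{i=0}^m λ_i (1/Γ(1-α)) ∫₀ᵗ (∂^{i+1}/∂s^{i+1}) u(x,s) (t-s)^{-α} ds = Ĝ[u(·,t)](x) for all x ∈ ℝ and t > 0. -/
/-!
Each Caputo derivative `C^{α+i}` is linear on functions that are `C^{i+1}` on `[0, ∞)`, so for fixed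
`x` it sends `u(x, ·) = Σⱼ Aⱼ φⱼ(x)` to `Σⱼ (C^{α+i} Aⱼ) φⱼ(x)`. Summing against `λᵢ` and using the
fractional ODEs gives `Σⱼ Φⱼ(A(t)) φⱼ(x)`, which is `G[u(·, t)](x)` by invariance of the span.
-/

open MeasureTheory Set Finset intervalIntegral Filter
open scoped Interval Topology

/-- The Caputo derivative `(C^{α+i} g)(t)`. -/
noncomputable def caputo (α : ℝ) (i : ℕ) (g : ℝ → ℝ) (t : ℝ) : ℝ :=
  (1 / Real.Gamma (1 - α)) * ∫ s in (0 : ℝ)..t, iteratedDeriv (i + 1) g s * (t - s) ^ (-α)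

theorem iteratedDeriv_fun_sum_apply {𝕜 F ι : Type*} [NontriviallyNormedField 𝕜]
    [NormedAddCommGroup F] [NormedSpace 𝕜 F] {f : ι → 𝕜 → F} {u : Finset ι} {n : ℕ} {x : 𝕜}
    (h : ∀ j ∈ u, ContDiffAt 𝕜 n (f j) x) :
    iteratedDeriv n (fun z ↦ ∑ j ∈ u, f j z) x = ∑ j ∈ u, iteratedDeriv n (f j) x := by
  simp [iteratedDeriv, iteratedFDeriv_fun_sum_apply h]

theorem iteratedDerivWithin_of_mem_nhds {𝕜 F : Type*} [NontriviallyNormedField 𝕜]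
    [NormedAddCommGroup F] [NormedSpace 𝕜 F] {f : 𝕜 → F} {s : Set 𝕜} {n : ℕ} {x : 𝕜}
    (hs : s ∈ 𝓝 x) : iteratedDerivWithin n f s x = iteratedDeriv n f x := by
  rw [iteratedDerivWithin, iteratedFDerivWithin_congr_set (eventuallyEq_univ.mpr hs),
    iteratedFDerivWithin_univ, iteratedDeriv]

theorem intervalIntegrable_iteratedDeriv_mul_rpow {g : ℝ → ℝ} {k : ℕ} {α t : ℝ}
    (hg : ContDiffOn ℝ k g (Ici 0)) (hα : α < 1) (ht : 0 ≤ t) :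
    IntervalIntegrable (fun s ↦ iteratedDeriv k g s * (t - s) ^ (-α)) volume 0 t := by
  have hweight : IntervalIntegrable (fun s : ℝ ↦ (t - s) ^ (-α)) volume 0 t := by
    simpa using ((intervalIntegrable_rpow' (by linarith) :
      IntervalIntegrable (fun s : ℝ ↦ s ^ (-α)) volume (t - t) (t - 0)).comp_sub_left t).symm
  have hcont : ContinuousOn (iteratedDerivWithin k g (Ici 0)) (uIcc 0 t) :=
    (hg.continuousOn_iteratedDerivWithin le_rfl (uniqueDiffOn_Ici 0)).mono
      (by rw [uIcc_of_le ht]; exact Icc_subset_Ici_self)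
  -- `iteratedDerivWithin` is continuous up to `0`, and agrees with `iteratedDeriv` on `(0, t]`.
  refine (hweight.continuousOn_mul hcont).congr fun s hs ↦ ?_
  rw [uIoc_of_le ht] at hs
  simp only [iteratedDerivWithin_of_mem_nhds (Ici_mem_nhds hs.1)]

theorem caputo_fun_sum_mul_const {ι : Type*} (u : Finset ι) {g : ι → ℝ → ℝ} (c : ι → ℝ)
    {α t : ℝ} {i : ℕ} (hg : ∀ j ∈ u, ContDiffOn ℝ (i + 1) (g j) (Ici 0)) (hα : α < 1)
    (ht : 0 ≤ t) :
    caputo α i (fun s ↦ ∑ j ∈ u, g j s * c j) t = ∑ j ∈ u, caputo α i (g j) t * c j := by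
  have hderiv : ∀ s ∈ Ι (0 : ℝ) t, iteratedDeriv (i + 1) (fun s ↦ ∑ j ∈ u, g j s * c j) s
      * (t - s) ^ (-α) = ∑ j ∈ u, iteratedDeriv (i + 1) (g j) s * (t - s) ^ (-α) * c j := by
    intro s hs
    rw [uIoc_of_le ht] at hs
    rw [iteratedDeriv_fun_sum_apply fun j hj ↦
      ((hg j hj).contDiffAt (Ici_mem_nhds hs.1)).mul contDiffAt_const, sum_mul]
    simp only [iteratedDeriv_mul_const_field]
    exact sum_congr rfl fun j _ ↦ by ring
  simp only [caputo, integral_congr_ae (ae_of_all _ hderiv),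
    integral_finsetSum fun j hj ↦
      (intervalIntegrable_iteratedDeriv_mul_rpow (hg j hj) hα ht).mul_const (c j),
    intervalIntegral.integral_mul_const, mul_sum]
  exact sum_congr rfl fun j _ ↦ by ring

theorem invariant_subspace_scalar_general (α : ℝ) (hα : α ∈ Set.Ioo (0 : ℝ) 1)
    (m : ℕ) (lam : Fin (m + 1) → ℝ) (n : ℕ)
    (φ : Fin n → ℝ → ℝ) (G : (ℝ → ℝ) → (ℝ → ℝ)) (Φ : Fin n → (Fin n → ℝ) → ℝ)
    (hinv : ∀ a : Fin n → ℝ,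
      G (fun x => ∑ j, a j * φ j x) = fun x => ∑ j, Φ j a * φ j x)
    (A : Fin n → ℝ → ℝ)
    (hA : ∀ j, ContDiffOn ℝ (m + 1) (A j) (Set.Ici (0 : ℝ)))
    (hode : ∀ t : ℝ, 0 < t → ∀ j : Fin n,
      ∑ i : Fin (m + 1),
          lam i * ((1 / Real.Gamma (1 - α)) *
            ∫ s in (0:ℝ)..t, iteratedDeriv ((i : ℕ) + 1) (A j) s * (t - s) ^ (-α))
        = Φ j fun j' => A j' t) :
    ∀ x : ℝ, ∀ t : ℝ, 0 < t →
      ∑ i : Fin (m + 1),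
          lam i * ((1 / Real.Gamma (1 - α)) *
            ∫ s in (0:ℝ)..t,
              iteratedDeriv ((i : ℕ) + 1) (fun s' => ∑ j, A j s' * φ j x) s *
                (t - s) ^ (-α))
        = G (fun x' => ∑ j, A j t * φ j x') x := by
  intro x t ht
  have hsmooth : ∀ (i : Fin (m + 1)) j, ContDiffOn ℝ ((i : ℕ) + 1) (A j) (Ici 0) :=
    fun i j ↦ (hA j).of_le (by exact_mod_cast i.isLt)
  calc ∑ i : Fin (m + 1), lam i * caputo α i (fun s ↦ ∑ j, A j s * φ j x) t
      = ∑ j, (∑ i : Fin (m + 1), lam i * caputo α i (A j) t) * φ j x := by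
        simp only [caputo_fun_sum_mul_const _ _ (fun j _ ↦ hsmooth _ j) hα.2 ht.le, mul_sum,
          sum_mul]
        rw [sum_comm]
        exact sum_congr rfl fun j _ ↦ sum_congr rfl fun i _ ↦ by ring
    _ = ∑ j, Φ j (fun j' ↦ A j' t) * φ j x := sum_congr rfl fun j _ ↦ by rw [← hode t ht j]; rfl
    _ = G (fun x' ↦ ∑ j, A j t * φ j x') x := (congrFun (hinv _) x).symm

/-- **Invariant subspace theorem for scalar time-fractional PDEs.**
If the span of `φ₁,…,φₙ` is invariant under the operator `G`, i.e.
`G[Σⱼ aⱼ φⱼ] = Σⱼ Φⱼ(a) φⱼ`, and the coefficient functions `Aⱼ` solve the system of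
fractional ODEs `Σᵢ λᵢ (C^(α+i) Aⱼ)(t) = Φⱼ(A₁(t),…,Aₙ(t))`, then
`u(x,t) = Σⱼ Aⱼ(t) φⱼ(x)` solves `Σᵢ λᵢ (C_t^(α+i) u)(x,t) = G[u(·,t)](x)`. -/
theorem invariant_subspace_scalar (α : ℝ) (hα : α ∈ Set.Ioo (0 : ℝ) 1)
    (m : ℕ) (lam : Fin (m + 1) → ℝ) (n : ℕ) (hn : 1 ≤ n)
    (φ : Fin n → ℝ → ℝ) (G : (ℝ → ℝ) → (ℝ → ℝ)) (Φ : Fin n → (Fin n → ℝ) → ℝ)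
    (hinv : ∀ a : Fin n → ℝ,
      G (fun x => ∑ j, a j * φ j x) = fun x => ∑ j, Φ j a * φ j x)
    (A : Fin n → ℝ → ℝ)
    (hA : ∀ j, ContDiffOn ℝ (m + 1) (A j) (Set.Ici (0 : ℝ)))
    (hode : ∀ t : ℝ, 0 < t → ∀ j : Fin n,
      ∑ i : Fin (m + 1),
          lam i * ((1 / Real.Gamma (1 - α)) *
            ∫ s in (0:ℝ)..t, iteratedDeriv ((i : ℕ) + 1) (A j) s * (t - s) ^ (-α))
        = Φ j fun j' => A j' t) :
    ∀ x : ℝ, ∀ t : ℝ, 0 < t →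
      ∑ i : Fin (m + 1),
          lam i * ((1 / Real.Gamma (1 - α)) *
            ∫ s in (0:ℝ)..t,
              iteratedDeriv ((i : ℕ) + 1) (fun s' => ∑ j, A j s' * φ j x) s *
                (t - s) ^ (-α))
        = G (fun x' => ∑ j, A j t * φ j x') x :=
  invariant_subspace_scalar_general α hα m lam n φ G Φ hinv A hA hode
end

section
/- Let n ∈ ℕ, n ≥ 1, let a₀,…,aₙ, b₁,…,b_{n+1}, k, k₀ ∈ ℝ with a_r k = b_{r+1} for r = 1,…,n, and set p(u) = Σ_{r=0}^n a_r u^r and q(u) = Σ_{r=1}^{n+1} b_r u^r + b₀ (b₀ ∈ ℝ). Then u(x,t) = k₀ e^{(a₀k² - b₁k)t + kx} is an exact solution of the classical diffusion–convection equation: for all x ∈ ℝ and t > 0, ∂u/∂t = p'(u) (∂u/∂x)² + p(u) ∂²u/∂x² - q'(u) ∂u/∂x. -/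
/-- The exact solution `u(x,t) = k₀ e^{(a₀k² - b₁k)t + kx}`. -/
noncomputable def uSol (a b : ℕ → ℝ) (k k₀ : ℝ) (x t : ℝ) : ℝ :=
  k₀ * Real.exp ((a 0 * k ^ 2 - b 1 * k) * t + k * x)

/-!
Along the exponential `u`, one has `∂ₜu = (a₀k² - b₁k) u`, `∂ₓu = k u` and `∂ₓ²u = k² u`, so the equation
is `k u` times the polynomial identity `k (u p'(u) + p(u)) = a₀ k - b₁ + q'(u)`.
-/

open Finset Real

lemma deriv_const_mul_exp_affine (c α β : ℝ) :
    deriv (fun s => c * exp (α * s + β)) = fun s => α * (c * exp (α * s + β)) := by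
  funext s
  have hinner : HasDerivAt (fun s => α * s + β) α s := by
    simpa using ((hasDerivAt_id s).const_mul α).add_const β
  rw [(hinner.exp.const_mul c).deriv]
  ring

lemma deriv_uSol_time (a b : ℕ → ℝ) (k k₀ x t : ℝ) :
    deriv (fun s => uSol a b k k₀ x s) t = (a 0 * k ^ 2 - b 1 * k) * uSol a b k k₀ x t :=
  congrFun (deriv_const_mul_exp_affine k₀ _ (k * x)) t

lemma deriv_uSol_space (a b : ℕ → ℝ) (k k₀ t : ℝ) :
    deriv (fun y => uSol a b k k₀ y t) = fun y => k * uSol a b k k₀ y t := by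
  simp only [uSol, add_comm _ (k * _)]
  exact deriv_const_mul_exp_affine k₀ k _

/-- Above degree zero both sides are `Σ (r+1) bᵣ₊₁ uʳ`, since `u p' + p = (u p)' = Σ (r+1) aᵣ uʳ` and `aᵣ k = bᵣ₊₁`. -/
lemma mul_sum_deriv_add_sum_eq (n : ℕ) (a b : ℕ → ℝ) (k : ℝ)
    (hab : ∀ r : ℕ, 1 ≤ r → r ≤ n → a r * k = b (r + 1)) (u : ℝ) :
    k * ((∑ r ∈ Icc 1 n, (r : ℝ) * a r * u ^ (r - 1)) * u + ∑ r ∈ range (n + 1), a r * u ^ r) =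
      a 0 * k - b 1 + ∑ r ∈ Icc 1 (n + 1), (r : ℝ) * b r * u ^ (r - 1) := by
  induction n with
  | zero => simp [mul_comm]
  | succ m ih =>
    have ih := ih fun r h1 h2 => hab r h1 (by omega)
    have htop : a (m + 1) * k = b (m + 2) := hab (m + 1) (by omega) le_rfl
    rw [sum_Icc_succ_top (by omega), sum_Icc_succ_top (by omega), sum_range_succ,
      show m + 1 - 1 = m by omega, show m + 2 - 1 = m + 1 by omega]
    push_cast
    linear_combination ih + ((m : ℝ) + 2) * u ^ (m + 1) * htop

theorem diffusion_convection_exact_general (n : ℕ) (a b : ℕ → ℝ) (k k₀ : ℝ)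
    (hab : ∀ r : ℕ, 1 ≤ r → r ≤ n → a r * k = b (r + 1)) :
    ∀ x : ℝ, ∀ t : ℝ, 0 < t →
      deriv (fun s => uSol a b k k₀ x s) t =
        (∑ r ∈ Finset.Icc 1 n, (r : ℝ) * a r * (uSol a b k k₀ x t) ^ (r - 1)) *
            (deriv (fun y => uSol a b k k₀ y t) x) ^ 2
          + (∑ r ∈ Finset.range (n + 1), a r * (uSol a b k k₀ x t) ^ r) *
            deriv (fun y => deriv (fun y' => uSol a b k k₀ y' t) y) x
          - (∑ r ∈ Finset.Icc 1 (n + 1), (r : ℝ) * b r * (uSol a b k k₀ x t) ^ (r - 1)) *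
            deriv (fun y => uSol a b k k₀ y t) x := by
  intro x t _
  have huxx : deriv (fun y => deriv (fun y' => uSol a b k k₀ y' t) y) x =
      k * (k * uSol a b k k₀ x t) := by
    rw [deriv_uSol_space, deriv_const_mul_field', deriv_uSol_space]
  rw [huxx, deriv_uSol_time, deriv_uSol_space]
  linear_combination (-k * uSol a b k k₀ x t) * mul_sum_deriv_add_sum_eq n a b k hab _

/-- **Exact solution of the classical diffusion–convection equation.**
With `p(u) = Σ_{r=0}^n aᵣ uʳ`, `q(u) = Σ_{r=1}^{n+1} bᵣ uʳ + b₀`, and `aᵣ k = b_{r+1}`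
for `r = 1,…,n`, the function `u(x,t) = k₀ e^{(a₀k² - b₁k)t + kx}` satisfies
`∂u/∂t = p'(u) (∂u/∂x)² + p(u) ∂²u/∂x² - q'(u) ∂u/∂x` for all `x ∈ ℝ`, `t > 0`. -/
theorem diffusion_convection_exact (n : ℕ) (hn : 1 ≤ n) (a b : ℕ → ℝ) (k k₀ : ℝ)
    (hab : ∀ r : ℕ, 1 ≤ r → r ≤ n → a r * k = b (r + 1)) :
    ∀ x : ℝ, ∀ t : ℝ, 0 < t →
      deriv (fun s => uSol a b k k₀ x s) t =
        (∑ r ∈ Finset.Icc 1 n, (r : ℝ) * a r * (uSol a b k k₀ x t) ^ (r - 1)) *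
            (deriv (fun y => uSol a b k k₀ y t) x) ^ 2
          + (∑ r ∈ Finset.range (n + 1), a r * (uSol a b k k₀ x t) ^ r) *
            deriv (fun y => deriv (fun y' => uSol a b k k₀ y' t) y) x
          - (∑ r ∈ Finset.Icc 1 (n + 1), (r : ℝ) * b r * (uSol a b k k₀ x t) ^ (r - 1)) *
            deriv (fun y => uSol a b k k₀ y t) x :=
  diffusion_convection_exact_general n a b k k₀ hab
end

section
/- Let k₁, k₂, k₃, k₄ ∈ ℝ. Then the pair u₁(x,t) = k₁ + k₄ t - k₂² t²/2 + k₂ x, u₂(x,t) = k₃ - k₂ (k₁ + (k₄/2) t - (k₂²/6) t²) t + (k₄ - k₂² t) x is an exact solution of the classical system of stationary transonic plane-parallel gas flow: for all x ∈ ℝ and t > 0, ∂u₁/∂t = ∂u₂/∂x and ∂u₂/∂t = -u₁ ∂u₁/∂x. -/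
/-- The component `u₁(x,t) = k₁ + k₄ t - k₂² t²/2 + k₂ x`. -/
noncomputable def u1Sol (k₁ k₂ k₄ : ℝ) (x t : ℝ) : ℝ :=
  k₁ + k₄ * t - k₂ ^ 2 * t ^ 2 / 2 + k₂ * x

/-- The component `u₂(x,t) = k₃ - k₂(k₁ + (k₄/2)t - (k₂²/6)t²)t + (k₄ - k₂² t) x`. -/
noncomputable def u2Sol (k₁ k₂ k₃ k₄ : ℝ) (x t : ℝ) : ℝ :=
  k₃ - k₂ * (k₁ + (k₄ / 2) * t - (k₂ ^ 2 / 6) * t ^ 2) * t + (k₄ - k₂ ^ 2 * t) * x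

/-!
In `t` both components are cubic polynomials and in `x` both are affine, so all four partial
derivatives are explicit: `∂u₁/∂t = ∂u₂/∂x = k₄ - k₂² t`, `∂u₁/∂x = k₂`, and `∂u₂/∂t = -k₂ u₁`.
-/

theorem hasDerivAt_cubic {𝕜 : Type*} [NontriviallyNormedField 𝕜] (a b c d t : 𝕜) :
    HasDerivAt (fun s => a + b * s + c * s ^ 2 + d * s ^ 3) (b + 2 * c * t + 3 * d * t ^ 2) t := by
  refine (((((hasDerivAt_id' t).const_mul b).const_add a).add
    ((hasDerivAt_pow 2 t).const_mul c)).add ((hasDerivAt_pow 3 t).const_mul d)).congr_deriv ?_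
  push_cast
  ring

theorem hasDerivAt_affine {𝕜 : Type*} [NontriviallyNormedField 𝕜] (a b x : 𝕜) :
    HasDerivAt (fun y => a + b * y) b x := by
  simpa using ((hasDerivAt_id' x).const_mul b).const_add a

section GasFlowSolution

variable (k₁ k₂ k₃ k₄ x t : ℝ)

theorem hasDerivAt_u1Sol_time :
    HasDerivAt (fun s => u1Sol k₁ k₂ k₄ x s) (k₄ - k₂ ^ 2 * t) t := by
  have hcubic : (fun s => u1Sol k₁ k₂ k₄ x s) =
      fun s => (k₁ + k₂ * x) + k₄ * s + (-k₂ ^ 2 / 2) * s ^ 2 + 0 * s ^ 3 := by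
    ext s
    rw [u1Sol]
    ring
  rw [hcubic]
  exact (hasDerivAt_cubic _ _ _ _ t).congr_deriv (by ring)

theorem hasDerivAt_u2Sol_time :
    HasDerivAt (fun s => u2Sol k₁ k₂ k₃ k₄ x s) (-u1Sol k₁ k₂ k₄ x t * k₂) t := by
  have hcubic : (fun s => u2Sol k₁ k₂ k₃ k₄ x s) = fun s =>
      (k₃ + k₄ * x) + (-k₂ * k₁ - k₂ ^ 2 * x) * s + (-k₂ * k₄ / 2) * s ^ 2
        + (k₂ ^ 3 / 6) * s ^ 3 := by
    ext s
    rw [u2Sol]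
    ring
  rw [hcubic, u1Sol]
  exact (hasDerivAt_cubic _ _ _ _ t).congr_deriv (by ring)

theorem hasDerivAt_u1Sol_space :
    HasDerivAt (fun y => u1Sol k₁ k₂ k₄ y t) k₂ x :=
  hasDerivAt_affine (k₁ + k₄ * t - k₂ ^ 2 * t ^ 2 / 2) k₂ x

theorem hasDerivAt_u2Sol_space :
    HasDerivAt (fun y => u2Sol k₁ k₂ k₃ k₄ y t) (k₄ - k₂ ^ 2 * t) x :=
  hasDerivAt_affine (k₃ - k₂ * (k₁ + (k₄ / 2) * t - (k₂ ^ 2 / 6) * t ^ 2) * t) _ x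

end GasFlowSolution

/-- **Exact solution of the classical system of stationary transonic plane-parallel
gas flow**: `∂u₁/∂t = ∂u₂/∂x` and `∂u₂/∂t = -u₁ ∂u₁/∂x` for all `x ∈ ℝ`, `t > 0`. -/
theorem classical_gas_flow_exact (k₁ k₂ k₃ k₄ : ℝ) :
    ∀ x : ℝ, ∀ t : ℝ, 0 < t →
      deriv (fun s => u1Sol k₁ k₂ k₄ x s) t = deriv (fun y => u2Sol k₁ k₂ k₃ k₄ y t) x ∧
      deriv (fun s => u2Sol k₁ k₂ k₃ k₄ x s) t =
        -u1Sol k₁ k₂ k₄ x t * deriv (fun y => u1Sol k₁ k₂ k₄ y t) x := by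
  intro x t _
  rw [(hasDerivAt_u1Sol_time k₁ k₂ k₄ x t).deriv, (hasDerivAt_u2Sol_space k₁ k₂ k₃ k₄ x t).deriv,
    (hasDerivAt_u2Sol_time k₁ k₂ k₃ k₄ x t).deriv, (hasDerivAt_u1Sol_space k₁ k₂ k₄ x t).deriv]
  exact ⟨rfl, rfl⟩
end
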